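/- arXiv:1502.02946 — 3 statements merged into one kernel-verified Lean document; each statement's English description precedes it below -/
import Mathlib

section
/- Let q be the real 2×2 matrix [[0,-1],[1,0]] acting on ℂ². For every complex number θ, the operator norm of the matrix exponential e^{qθ} equals e^{|Im θ|}; in particular |e^{qθ}v| ≤ e^{|Im θ|}|v| for all v ∈ ℂ². -/
/-!
The matrix `q` is unitarily diagonalisable: `q = U diag(i, -i) U⋆` with `U` the matrix of the
normalised eigenvectors `(1, ∓i)/√2`. Hence `e^{θq} = U diag(e^{iθ}, e^{-iθ}) U⋆`, and since the
operator norm on `ℂ²` is a C⋆-norm, unitary conjugation does not change it, so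
`‖e^{θq}‖ = max |e^{±iθ}| = e^{|Im θ|}`.
-/

namespace Matrix

variable {n : Type*} [Fintype n] [DecidableEq n] {𝕜 : Type*} [RCLike 𝕜]

open scoped Matrix.Norms.L2Operator in
theorem norm_toEuclideanCLM_unitary_conj_diagonal {U : Matrix n n 𝕜}
    (hU : U ∈ unitaryGroup n 𝕜) (d : n → 𝕜) :
    ‖toEuclideanCLM (𝕜 := 𝕜) (U * diagonal d * star U)‖ = ‖d‖ := by
  rw [← cstar_norm_def, CStarRing.norm_mul_mem_unitary _ (Unitary.star_mem hU),
    CStarRing.norm_mem_unitary_mul _ hU, l2_opNorm_diagonal]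

theorem exp_unitary_conj {U : Matrix n n 𝕜} (hU : U ∈ unitaryGroup n 𝕜) (A : Matrix n n 𝕜) :
    NormedSpace.exp (U * A * star U) = U * NormedSpace.exp A * star U := by
  have hinv : U⁻¹ = star U := inv_eq_left_inv (mem_unitaryGroup_iff'.mp hU)
  rw [← hinv, exp_conj _ _ (Unitary.isUnit_coe (U := ⟨U, hU⟩))]

end Matrix

theorem norm_vecCons_two {E : Type*} [SeminormedAddGroup E] (a b : E) :
    ‖![a, b]‖ = max ‖a‖ ‖b‖ := by
  simp [Pi.norm_def, Fin.univ_succ, Finset.sup_insert]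

open Complex Matrix

theorem ofReal_sqrt_two_sq : ((√2 : ℝ) : ℂ) ^ 2 = 2 := by
  rw [← ofReal_pow, Real.sq_sqrt zero_le_two, ofReal_ofNat]

noncomputable def rotationEigenbasis : Matrix (Fin 2) (Fin 2) ℂ :=
  (√2)⁻¹ • !![1, 1; -I, I]

theorem rotationEigenbasis_mem_unitaryGroup : rotationEigenbasis ∈ unitaryGroup (Fin 2) ℂ := by
  rw [mem_unitaryGroup_iff', rotationEigenbasis, star_smul, star_eq_conjTranspose]
  ext i j
  fin_cases i <;> fin_cases j <;> simp [mul_apply, Fin.sum_univ_two] <;> ring_nf <;>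
    simp [ofReal_sqrt_two_sq] <;> norm_num

theorem rotation_eq_unitary_conj_diagonal :
    !![0, -1; 1, 0] = rotationEigenbasis * diagonal ![I, -I] * star rotationEigenbasis := by
  rw [rotationEigenbasis, star_smul, star_eq_conjTranspose]
  ext i j
  fin_cases i <;> fin_cases j <;> simp [mul_apply, Fin.sum_univ_two, vecMul_diagonal] <;>
    ring_nf <;> simp [ofReal_sqrt_two_sq]

theorem norm_exp_smul_I_neg_I (θ : ℂ) :
    ‖NormedSpace.exp (θ • ![I, -I])‖ = Real.exp |θ.im| := by
  have hexp : NormedSpace.exp (θ • ![I, -I]) = ![exp (θ * I), exp (-(θ * I))] := by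
    ext i
    fin_cases i <;> simp [Pi.coe_exp, exp_eq_exp_ℂ]
  rw [hexp, norm_vecCons_two, norm_exp, norm_exp, abs_eq_max_neg, Real.exp_monotone.map_max]
  simp [max_comm]

/-- The operator norm of `e^{qθ}` on `ℂ²`, where `q = [[0,-1],[1,0]]`, equals `e^{|Im θ|}`;
in particular `|e^{qθ} v| ≤ e^{|Im θ|} |v|` for all `v ∈ ℂ²`. -/
theorem stmt0 (θ : ℂ) (q : Matrix (Fin 2) (Fin 2) ℂ) (hq : q = !![0, -1; 1, 0]) :
    ‖Matrix.toEuclideanCLM (𝕜 := ℂ) (NormedSpace.exp (θ • q))‖ = Real.exp |θ.im| ∧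
    ∀ v : EuclideanSpace ℂ (Fin 2),
      ‖Matrix.toEuclideanCLM (𝕜 := ℂ) (NormedSpace.exp (θ • q)) v‖
        ≤ Real.exp |θ.im| * ‖v‖ := by
  have hU := rotationEigenbasis_mem_unitaryGroup
  have hconj : θ • q = rotationEigenbasis * diagonal (θ • ![I, -I]) * star rotationEigenbasis := by
    rw [hq, rotation_eq_unitary_conj_diagonal, diagonal_smul, Matrix.mul_smul, Matrix.smul_mul]
  have hnorm : ‖toEuclideanCLM (𝕜 := ℂ) (NormedSpace.exp (θ • q))‖ = Real.exp |θ.im| := by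
    rw [hconj, exp_unitary_conj hU, exp_diagonal, norm_toEuclideanCLM_unitary_conj_diagonal hU,
      norm_exp_smul_I_neg_I]
  exact ⟨hnorm, fun v => hnorm ▸ ContinuousLinearMap.le_opNorm _ v⟩
end

section
/- (Axial gauge bound on a unit lattice.) Let A be a real gauge field on the bonds of a finite box in ℤ³ and fix a reference point y in the box. There exists a function λ on the box such that A = A' + ∂λ, where A' depends only on the field strength dA, and |A'(b)| ≤ d(b,y)·‖dA‖_∞ for every bond b, where d(b,y) is the sup-metric distance from b to y. -/
/-!
For an ordering `c₀, c₁, c₂` of the axes let `λ(x)` be the sum of `A` along the path from `y` to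
`x` that moves first along `c₀`, then along `c₁`, then along `c₂`. Then `A - ∂λ` is in axial
gauge: it vanishes on `c₂`-bonds, on `c₁`-bonds in the plane `x c₂ = y c₂` and on `c₀`-bonds on
the line through `y`. Since `d(A - ∂λ) = dA`, telescoping along `c₂` (and then along `c₁`) writes
the `c₁`-component of `A - ∂λ` at `x` as the flux of `dA` through one strip of at most `d(b, y)`
plaquettes, and the `c₀`-component as the flux through two such strips; all these plaquettes lie
between `x` and `y`, hence in the box. A single ordering thus only gives `2 d(b, y) ‖dA‖_∞`; but
averaging `λ` over the three cyclic orderings, in which each axis is first, second and third once,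
makes every component a third of the flux through three strips.
-/

open Finset Function

namespace AxialGauge

section LineSum

variable {G : Type*} [AddCommGroup G] (f : ℤ → G) (a b : ℤ)

/-- The signed sum of `f` from `a` to `b` (one of the two sums is always empty). -/
noncomputable def lineSum : G := ∑ n ∈ Ico a b, f n - ∑ n ∈ Ico b a, f n

@[simp]
theorem lineSum_self : lineSum f a a = 0 := by simp [lineSum]

theorem lineSum_add_one_right : lineSum f a (b + 1) = lineSum f a b + f b := by
  unfold lineSum
  rcases le_or_gt a b with h | h
  · rw [← insert_Ico_right_eq_Ico_add_one h, sum_insert right_notMem_Ico,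
      Ico_eq_empty_of_le (a := b + 1) (b := a) (by omega), Ico_eq_empty_of_le (a := b) h]
    simp only [sum_empty]
    abel
  · rw [← insert_Ico_add_one_left_eq_Ico h, sum_insert (by simp),
      Ico_eq_empty_of_le (a := a) (b := b + 1) (by omega), Ico_eq_empty_of_le (a := a) h.le]
    simp only [sum_empty]
    abel

variable {f a b}

theorem lineSum_eq_sub_of_eq_sub {H : ℤ → G} (hf : ∀ n, f n = H (n + 1) - H n) :
    lineSum f a b = H b - H a := by
  induction b using Int.inductionOn' (b := a) with
  | zero => simp
  | succ k _ ih => rw [lineSum_add_one_right, ih, hf]; abel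
  | pred k _ ih =>
    rw [← sub_add_cancel k 1, lineSum_add_one_right, hf, sub_add_cancel] at ih
    rw [eq_sub_iff_add_eq.mpr ih]
    abel

theorem lineSum_congr {g : ℤ → G} (h : ∀ n ∈ Ico a b ∪ Ico b a, f n = g n) :
    lineSum f a b = lineSum g a b := by
  unfold lineSum
  rw [sum_congr rfl fun n hn => h n (mem_union_left _ hn),
    sum_congr rfl fun n hn => h n (mem_union_right _ hn)]

end LineSum

theorem norm_lineSum_le {E : Type*} [SeminormedAddCommGroup E] {f : ℤ → E} {a b : ℤ} {M : ℝ}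
    (h : ∀ n ∈ Ico a b ∪ Ico b a, ‖f n‖ ≤ M) : ‖lineSum f a b‖ ≤ (b - a).natAbs * M :=
  calc ‖lineSum f a b‖ ≤ ‖∑ n ∈ Ico a b, f n‖ + ‖∑ n ∈ Ico b a, f n‖ := norm_sub_le _ _
    _ ≤ ∑ _n ∈ Ico a b, M + ∑ _n ∈ Ico b a, M :=
      add_le_add (norm_sum_le_of_le _ fun n hn => h n (mem_union_left _ hn))
        (norm_sum_le_of_le _ fun n hn => h n (mem_union_right _ hn))
    _ = (b - a).natAbs * M := by
      simp only [sum_const, Int.card_Ico, nsmul_eq_mul, ← add_mul]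
      congr 1
      norm_cast
      omega

section Lattice

variable {ι G : Type*} [DecidableEq ι] [AddCommGroup G]

theorem update_add_single_self (x : ι → ℤ) (ν : ι) (n : ℤ) :
    update x ν n + Pi.single ν 1 = update x ν (n + 1) := by
  ext i; by_cases h : i = ν <;> simp [h]

theorem update_add_single_of_ne {μ ν : ι} (h : μ ≠ ν) (x : ι → ℤ) (n : ℤ) :
    update x ν n + Pi.single μ 1 = update (x + Pi.single μ 1) ν n := by
  ext i; by_cases hi : i = ν <;> simp [hi, Pi.single_apply, Ne.symm h]

theorem update_add_single_idem (x : ι → ℤ) (ν : ι) (n : ℤ) :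
    update (x + Pi.single ν 1) ν n = update x ν n := by
  ext i; by_cases h : i = ν <;> simp [h]

def curl (A : (ι → ℤ) → ι → G) (x : ι → ℤ) (μ ν : ι) : G :=
  A x μ + A (x + Pi.single μ 1) ν - A (x + Pi.single ν 1) μ - A x ν

def grad (f : (ι → ℤ) → G) (x : ι → ℤ) (μ : ι) : G := f (x + Pi.single μ 1) - f x

@[simp]
theorem curl_sub_grad (A : (ι → ℤ) → ι → G) (f : (ι → ℤ) → G) : curl (A - grad f) = curl A := by
  ext x μ ν
  simp only [curl, grad, Pi.sub_apply, add_right_comm x (Pi.single μ 1)]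
  abel

noncomputable def lineIntegral (A : (ι → ℤ) → ι → G) (x : ι → ℤ) (ν : ι) (t : ℤ) : G :=
  lineSum (fun n => A (update x ν n) ν) t (x ν)

/-- The flux of `F` through the plaquettes `(·, μ, ν)` swept by the bond `(x, μ)` when it is moved
along `ν` from coordinate `t` to `x ν`. -/
noncomputable def stripFlux (F : (ι → ℤ) → ι → ι → G) (x : ι → ℤ) (μ ν : ι) (t : ℤ) : G :=
  lineSum (fun n => F (update x ν n) μ ν) t (x ν)

theorem lineIntegral_of_apply_eq (A : (ι → ℤ) → ι → G) {x : ι → ℤ} {ν : ι} {t : ℤ} (h : x ν = t) :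
    lineIntegral A x ν t = 0 := by
  simp [lineIntegral, h]

theorem lineIntegral_add_single_self (A : (ι → ℤ) → ι → G) (x : ι → ℤ) (ν : ι) (t : ℤ) :
    lineIntegral A (x + Pi.single ν 1) ν t = lineIntegral A x ν t + A x ν := by
  simp [lineIntegral, update_add_single_idem, lineSum_add_one_right]

theorem eq_sub_stripFlux_curl {B : (ι → ℤ) → ι → G} {μ ν : ι} (hμν : μ ≠ ν) (x : ι → ℤ) (t : ℤ)
    (h₀ : ∀ n, B (update x ν n) ν = 0) (h₁ : ∀ n, B (update (x + Pi.single μ 1) ν n) ν = 0) :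
    B x μ = B (update x ν t) μ - stripFlux (curl B) x μ ν t := by
  have hflux : stripFlux (curl B) x μ ν t = -B x μ - -B (update x ν t) μ := by
    refine (lineSum_eq_sub_of_eq_sub (H := fun n => -B (update x ν n) μ) fun n => ?_).trans
      (by rw [update_eq_self])
    rw [curl, update_add_single_of_ne hμν, update_add_single_self, h₀, h₁]
    abel
  rw [hflux]
  abel

variable {c₀ c₁ c₂ : ι}

structure IsAxialGauge (B : (ι → ℤ) → ι → G) (y : ι → ℤ) (c₀ c₁ c₂ : ι) : Prop where
  vanish₂ : ∀ x, B x c₂ = 0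
  vanish₁ : ∀ x, x c₂ = y c₂ → B x c₁ = 0
  vanish₀ : ∀ x, x c₁ = y c₁ → x c₂ = y c₂ → B x c₀ = 0

namespace IsAxialGauge

variable {B : (ι → ℤ) → ι → G} {y : ι → ℤ}

theorem apply₁ (hB : IsAxialGauge B y c₀ c₁ c₂) (h12 : c₁ ≠ c₂) (x : ι → ℤ) :
    B x c₁ = -stripFlux (curl B) x c₁ c₂ (y c₂) := by
  rw [eq_sub_stripFlux_curl h12 x (y c₂) (fun _ => hB.vanish₂ _) (fun _ => hB.vanish₂ _),
    hB.vanish₁ _ (by simp), zero_sub]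

theorem apply₀ (hB : IsAxialGauge B y c₀ c₁ c₂) (h01 : c₀ ≠ c₁) (h02 : c₀ ≠ c₂)
    (h12 : c₁ ≠ c₂) (x : ι → ℤ) :
    B x c₀ = -stripFlux (curl B) x c₀ c₂ (y c₂)
      - stripFlux (curl B) (update x c₂ (y c₂)) c₀ c₁ (y c₁) := by
  rw [eq_sub_stripFlux_curl h02 x (y c₂) (fun _ => hB.vanish₂ _) (fun _ => hB.vanish₂ _),
    eq_sub_stripFlux_curl h01 _ (y c₁) (fun _ => hB.vanish₁ _ (by simp [Ne.symm h12]))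
      (fun _ => hB.vanish₁ _ (by simp [Ne.symm h12, Ne.symm h02])),
    hB.vanish₀ _ (by simp) (by simp [Ne.symm h12])]
  abel

end IsAxialGauge

/-- The sum of `A` along the path from `y` to `x` that moves first along `c₀`, then along `c₁`,
then along `c₂` (for a general index type `ι`, it starts at `x` with the `c`-coordinates of `y`). -/
noncomputable def axialPotential (A : (ι → ℤ) → ι → G) (y : ι → ℤ) (c₀ c₁ c₂ : ι)
    (x : ι → ℤ) : G :=
  lineIntegral A (update (update x c₂ (y c₂)) c₁ (y c₁)) c₀ (y c₀)
    + lineIntegral A (update x c₂ (y c₂)) c₁ (y c₁) + lineIntegral A x c₂ (y c₂)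

noncomputable def axialField (A : (ι → ℤ) → ι → G) (y : ι → ℤ) (c₀ c₁ c₂ : ι) :
    (ι → ℤ) → ι → G :=
  A - grad (axialPotential A y c₀ c₁ c₂)

@[simp]
theorem curl_axialField (A : (ι → ℤ) → ι → G) (y : ι → ℤ) :
    curl (axialField A y c₀ c₁ c₂) = curl A :=
  curl_sub_grad _ _

theorem isAxialGauge_axialField (A : (ι → ℤ) → ι → G) (y : ι → ℤ)
    (h01 : c₀ ≠ c₁) (h02 : c₀ ≠ c₂) (h12 : c₁ ≠ c₂) :
    IsAxialGauge (axialField A y c₀ c₁ c₂) y c₀ c₁ c₂ where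
  vanish₂ x := by
    simp [axialField, grad, axialPotential, update_add_single_idem, lineIntegral_add_single_self]
  vanish₁ x hx := by
    have h₂ : update x c₂ (y c₂) = x := by rw [← hx, update_eq_self]
    have hx' : (x + Pi.single c₁ 1 : ι → ℤ) c₂ = y c₂ := by simp [hx, Ne.symm h12]
    simp [axialField, grad, axialPotential, ← update_add_single_of_ne h12, update_add_single_idem,
      h₂, lineIntegral_add_single_self, lineIntegral_of_apply_eq A hx,
      lineIntegral_of_apply_eq A hx']
  vanish₀ x hx₁ hx₂ := by
    have h₂ : update x c₂ (y c₂) = x := by rw [← hx₂, update_eq_self]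
    have h₁ : update x c₁ (y c₁) = x := by rw [← hx₁, update_eq_self]
    have hx₁' : (x + Pi.single c₀ 1 : ι → ℤ) c₁ = y c₁ := by simp [hx₁, Ne.symm h01]
    have hx₂' : (x + Pi.single c₀ 1 : ι → ℤ) c₂ = y c₂ := by simp [hx₂, Ne.symm h02]
    simp [axialField, grad, axialPotential, ← update_add_single_of_ne h02,
      ← update_add_single_of_ne h01, h₁, h₂, lineIntegral_add_single_self,
      lineIntegral_of_apply_eq A hx₁, lineIntegral_of_apply_eq A hx₂,
      lineIntegral_of_apply_eq A hx₁', lineIntegral_of_apply_eq A hx₂']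

def laterAxes (c₀ c₁ μ : ι) : ℕ := if μ = c₀ then 2 else if μ = c₁ then 1 else 0

def IsPlaquetteIn (S : Set (ι → ℤ)) (x : ι → ℤ) (μ ν : ι) : Prop :=
  x ∈ S ∧ x + Pi.single μ 1 ∈ S ∧ x + Pi.single ν 1 ∈ S ∧ x + Pi.single μ 1 + Pi.single ν 1 ∈ S

section Box

variable {a b x : ι → ℤ} {μ ν : ι} {t : ℤ}

theorem isPlaquetteIn_Icc_of_le (ha : a ≤ x) (hb : x + Pi.single μ 1 + Pi.single ν 1 ≤ b) :
    IsPlaquetteIn (Set.Icc a b) x μ ν := by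
  have hμ : (0 : ι → ℤ) ≤ Pi.single μ 1 := Pi.single_nonneg.mpr zero_le_one
  have hν : (0 : ι → ℤ) ≤ Pi.single ν 1 := Pi.single_nonneg.mpr zero_le_one
  have hxμ : x ≤ x + Pi.single μ 1 := le_add_of_nonneg_right hμ
  have hxν : x ≤ x + Pi.single ν 1 := le_add_of_nonneg_right hν
  have hμb : x + Pi.single μ 1 ≤ b := (le_add_of_nonneg_right hν).trans hb
  have hνb : x + Pi.single ν 1 ≤ b := by
    rw [add_right_comm] at hb
    exact (le_add_of_nonneg_right hμ).trans hb
  exact ⟨⟨ha, hxμ.trans hμb⟩, ⟨ha.trans hxμ, hμb⟩, ⟨ha.trans hxν, hνb⟩,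
    ⟨(ha.trans hxμ).trans (le_add_of_nonneg_right hν), hb⟩⟩

theorem update_mem_Icc (hx : x ∈ Set.Icc a b) (ht : t ∈ Set.Icc (a ν) (b ν)) :
    update x ν t ∈ Set.Icc a b :=
  ⟨le_update_iff.mpr ⟨ht.1, fun j _ => hx.1 j⟩, update_le_iff.mpr ⟨ht.2, fun j _ => hx.2 j⟩⟩

theorem isPlaquetteIn_Icc_update (hμν : μ ≠ ν) (hx : x ∈ Set.Icc a b)
    (hx' : x + Pi.single μ 1 ∈ Set.Icc a b) (ht : t ∈ Set.Icc (a ν) (b ν)) {n : ℤ}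
    (hn : n ∈ Ico t (x ν) ∪ Ico (x ν) t) : IsPlaquetteIn (Set.Icc a b) (update x ν n) μ ν := by
  have hn' : a ν ≤ n ∧ n + 1 ≤ b ν := by
    have hxν : a ν ≤ x ν ∧ x ν ≤ b ν := ⟨hx.1 ν, hx.2 ν⟩
    simp only [Set.mem_Icc] at ht
    simp only [mem_union, mem_Ico] at hn
    omega
  refine isPlaquetteIn_Icc_of_le (le_update_iff.mpr ⟨hn'.1, fun j _ => hx.1 j⟩) ?_
  rw [update_add_single_of_ne hμν, update_add_single_self]
  exact update_le_iff.mpr ⟨hn'.2, fun j _ => hx'.2 j⟩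

theorem stripFlux_congr {F₁ F₂ : (ι → ℤ) → ι → ι → G} (hμν : μ ≠ ν) (hx : x ∈ Set.Icc a b)
    (hx' : x + Pi.single μ 1 ∈ Set.Icc a b) (ht : t ∈ Set.Icc (a ν) (b ν))
    (hF : ∀ v, IsPlaquetteIn (Set.Icc a b) v μ ν → F₁ v μ ν = F₂ v μ ν) :
    stripFlux F₁ x μ ν t = stripFlux F₂ x μ ν t :=
  lineSum_congr fun _ hn => hF _ (isPlaquetteIn_Icc_update hμν hx hx' ht hn)

theorem norm_stripFlux_le {E : Type*} [SeminormedAddCommGroup E] {F : (ι → ℤ) → ι → ι → E}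
    {M : ℝ} (hμν : μ ≠ ν) (hx : x ∈ Set.Icc a b)
    (hx' : x + Pi.single μ 1 ∈ Set.Icc a b) (ht : t ∈ Set.Icc (a ν) (b ν))
    (hF : ∀ v, IsPlaquetteIn (Set.Icc a b) v μ ν → ‖F v μ ν‖ ≤ M) :
    ‖stripFlux F x μ ν t‖ ≤ (x ν - t).natAbs * M :=
  norm_lineSum_le fun _ hn => hF _ (isPlaquetteIn_Icc_update hμν hx hx' ht hn)

theorem update_bond_mem_Icc (hμν : μ ≠ ν) (hx : x ∈ Set.Icc a b)
    (hx' : x + Pi.single μ 1 ∈ Set.Icc a b) (ht : t ∈ Set.Icc (a ν) (b ν)) :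
    update x ν t ∈ Set.Icc a b ∧ update x ν t + Pi.single μ 1 ∈ Set.Icc a b :=
  ⟨update_mem_Icc hx ht, update_add_single_of_ne hμν x t ▸ update_mem_Icc hx' ht⟩

variable {y : ι → ℤ} {c₀ c₁ c₂ : ι} (h01 : c₀ ≠ c₁) (h02 : c₀ ≠ c₂) (h12 : c₁ ≠ c₂)
  (hcov : ∀ i, i = c₀ ∨ i = c₁ ∨ i = c₂)
include h01 h02 h12 hcov

theorem axialField_congr {A₁ A₂ : (ι → ℤ) → ι → G} (hy : y ∈ Set.Icc a b) (hx : x ∈ Set.Icc a b)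
    (hx' : x + Pi.single μ 1 ∈ Set.Icc a b)
    (hF : ∀ v μ ν, IsPlaquetteIn (Set.Icc a b) v μ ν → curl A₁ v μ ν = curl A₂ v μ ν) :
    axialField A₁ y c₀ c₁ c₂ x μ = axialField A₂ y c₀ c₁ c₂ x μ := by
  have hyc (i : ι) : y i ∈ Set.Icc (a i) (b i) := ⟨hy.1 i, hy.2 i⟩
  have g₁ := isAxialGauge_axialField A₁ y h01 h02 h12
  have g₂ := isAxialGauge_axialField A₂ y h01 h02 h12
  rcases hcov μ with h | h | h <;> subst μ
  · obtain ⟨hx₁, hx₁'⟩ := update_bond_mem_Icc h02 hx hx' (hyc c₂)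
    rw [g₁.apply₀ h01 h02 h12, g₂.apply₀ h01 h02 h12, curl_axialField, curl_axialField,
      stripFlux_congr h02 hx hx' (hyc _) fun v => hF v _ _,
      stripFlux_congr h01 hx₁ hx₁' (hyc _) fun v => hF v _ _]
  · rw [g₁.apply₁ h12, g₂.apply₁ h12, curl_axialField, curl_axialField,
      stripFlux_congr h12 hx hx' (hyc _) fun v => hF v _ _]
  · rw [g₁.vanish₂, g₂.vanish₂]

theorem norm_axialField_le {E : Type*} [SeminormedAddCommGroup E] {A : (ι → ℤ) → ι → E}
    {M D : ℝ} (hy : y ∈ Set.Icc a b) (hx : x ∈ Set.Icc a b)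
    (hx' : x + Pi.single μ 1 ∈ Set.Icc a b) (hM : 0 ≤ M) (hD : ∀ i, ((x i - y i).natAbs : ℝ) ≤ D)
    (hF : ∀ v μ ν, IsPlaquetteIn (Set.Icc a b) v μ ν → ‖curl A v μ ν‖ ≤ M) :
    ‖axialField A y c₀ c₁ c₂ x μ‖ ≤ laterAxes c₀ c₁ μ * (D * M) := by
  have hyc (i : ι) : y i ∈ Set.Icc (a i) (b i) := ⟨hy.1 i, hy.2 i⟩
  have hDM (i : ι) : ((x i - y i).natAbs : ℝ) * M ≤ D * M := mul_le_mul_of_nonneg_right (hD i) hM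
  have g := isAxialGauge_axialField A y h01 h02 h12
  rcases hcov μ with h | h | h <;> subst μ
  · obtain ⟨hx₁, hx₁'⟩ := update_bond_mem_Icc h02 hx hx' (hyc c₂)
    rw [g.apply₀ h01 h02 h12, curl_axialField]
    calc _ ≤ ‖stripFlux (curl A) x c₀ c₂ (y c₂)‖
          + ‖stripFlux (curl A) (update x c₂ (y c₂)) c₀ c₁ (y c₁)‖ :=
          (norm_sub_le _ _).trans_eq (by rw [norm_neg])
      _ ≤ ((x c₂ - y c₂).natAbs : ℝ) * M + ((x c₁ - y c₁).natAbs : ℝ) * M := by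
          refine add_le_add (norm_stripFlux_le h02 hx hx' (hyc _) fun v => hF v _ _) ?_
          simpa [update_of_ne h12] using
            norm_stripFlux_le h01 hx₁ hx₁' (hyc _) fun v => hF v _ _
      _ ≤ laterAxes c₀ c₁ c₀ * (D * M) := by
          simp only [laterAxes, if_pos, Nat.cast_ofNat]
          linarith [hDM c₁, hDM c₂]
  · rw [g.apply₁ h12, curl_axialField, norm_neg]
    simpa [laterAxes, Ne.symm h01] using
      (norm_stripFlux_le h12 hx hx' (hyc _) fun v => hF v _ _).trans (hDM c₂)
  · simp [g.vanish₂, laterAxes, Ne.symm h02, Ne.symm h12]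

end Box

end Lattice

section Average

variable {a b x y : Fin 3 → ℤ} {μ : Fin 3}

noncomputable def averagedPotential (A : (Fin 3 → ℤ) → Fin 3 → ℝ) (y x : Fin 3 → ℤ) : ℝ :=
  (axialPotential A y 0 1 2 x + axialPotential A y 1 2 0 x + axialPotential A y 2 0 1 x) / 3

theorem sub_grad_averagedPotential_apply (A : (Fin 3 → ℤ) → Fin 3 → ℝ) :
    (A - grad (averagedPotential A y)) x μ =
      (axialField A y 0 1 2 x μ + axialField A y 1 2 0 x μ + axialField A y 2 0 1 x μ) / 3 := by
  simp only [axialField, grad, averagedPotential, Pi.sub_apply]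
  ring

theorem sub_grad_averagedPotential_congr {A₁ A₂ : (Fin 3 → ℤ) → Fin 3 → ℝ}
    (hy : y ∈ Set.Icc a b) (hx : x ∈ Set.Icc a b) (hx' : x + Pi.single μ 1 ∈ Set.Icc a b)
    (hF : ∀ v μ ν, IsPlaquetteIn (Set.Icc a b) v μ ν → curl A₁ v μ ν = curl A₂ v μ ν) :
    (A₁ - grad (averagedPotential A₁ y)) x μ = (A₂ - grad (averagedPotential A₂ y)) x μ := by
  simp only [sub_grad_averagedPotential_apply]
  rw [axialField_congr (c₀ := 0) (c₁ := 1) (c₂ := 2) (by decide) (by decide) (by decide)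
      (by decide) hy hx hx' hF,
    axialField_congr (c₀ := 1) (c₁ := 2) (c₂ := 0) (by decide) (by decide) (by decide)
      (by decide) hy hx hx' hF,
    axialField_congr (c₀ := 2) (c₁ := 0) (c₂ := 1) (by decide) (by decide) (by decide)
      (by decide) hy hx hx' hF]

theorem abs_sub_grad_averagedPotential_le {A : (Fin 3 → ℤ) → Fin 3 → ℝ} {M D : ℝ}
    (hy : y ∈ Set.Icc a b) (hx : x ∈ Set.Icc a b) (hx' : x + Pi.single μ 1 ∈ Set.Icc a b)
    (hM : 0 ≤ M) (hD : ∀ i, ((x i - y i).natAbs : ℝ) ≤ D)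
    (hF : ∀ v μ ν, IsPlaquetteIn (Set.Icc a b) v μ ν → |curl A v μ ν| ≤ M) :
    |(A - grad (averagedPotential A y)) x μ| ≤ D * M := by
  simp only [← Real.norm_eq_abs] at hF ⊢
  have h₀ := norm_axialField_le (c₀ := 0) (c₁ := 1) (c₂ := 2) (by decide) (by decide) (by decide)
    (by decide) hy hx hx' hM hD hF
  have h₁ := norm_axialField_le (c₀ := 1) (c₁ := 2) (c₂ := 0) (by decide) (by decide) (by decide)
    (by decide) hy hx hx' hM hD hF
  have h₂ := norm_axialField_le (c₀ := 2) (c₁ := 0) (c₂ := 1) (by decide) (by decide) (by decide)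
    (by decide) hy hx hx' hM hD hF
  have hcount : laterAxes 0 1 μ + laterAxes 1 2 μ + laterAxes 2 0 μ = 3 := by
    fin_cases μ <;> decide
  rw [sub_grad_averagedPotential_apply, norm_div, RCLike.norm_ofNat, div_le_iff₀ three_pos]
  calc _ ≤ _ := norm_add₃_le
    _ ≤ _ := add_le_add_three h₀ h₁ h₂
    _ = D * M * 3 := by
      rw [← add_mul, ← add_mul, ← Nat.cast_add, ← Nat.cast_add, hcount, Nat.cast_ofNat, mul_comm]

end Average

end AxialGauge

open AxialGauge

/-- Axial gauge bound on a unit lattice: on a finite box in `ℤ³` with a reference point `y`,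
every gauge field `A` on bonds decomposes as `A = A' + ∂λ` where `A' = T A` depends only on the
field strength `dA`, and `|A'(b)| ≤ d(b,y) ‖dA‖_∞` for every bond `b` of the box.

Bonds are encoded as pairs `(x, μ)` representing `(x, x + e_μ)`; the field strength on the
plaquette `(x, μ, ν)` is `A x μ + A (x+e_μ) ν - A (x+e_ν) μ - A x ν`; `d(b,y)` is the sup-metric
distance from the bond (the larger of the distances of its endpoints) to `y`. -/
theorem stmt9 (N : ℕ) (y : Fin 3 → ℤ)
    (InBox : (Fin 3 → ℤ) → Prop)
    (hBox : ∀ x, InBox x ↔ ∀ i, 0 ≤ x i ∧ x i ≤ (N : ℤ))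
    (hy : InBox y)
    (eV : Fin 3 → Fin 3 → ℤ) (heV : ∀ μ ν, eV μ ν = if ν = μ then 1 else 0)
    (dA : ((Fin 3 → ℤ) → Fin 3 → ℝ) → (Fin 3 → ℤ) → Fin 3 → Fin 3 → ℝ)
    (hdA : ∀ A x μ ν, dA A x μ ν =
      A x μ + A (x + eV μ) ν - A (x + eV ν) μ - A x ν)
    (bondDist : (Fin 3 → ℤ) → Fin 3 → ℝ)
    (hbd : ∀ x μ, bondDist x μ =
      ((max (Finset.univ.sup fun i => (x i - y i).natAbs)
            (Finset.univ.sup fun i => ((x + eV μ) i - y i).natAbs) : ℕ) : ℝ)) :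
    ∃ T : ((Fin 3 → ℤ) → Fin 3 → ℝ) → ((Fin 3 → ℤ) → Fin 3 → ℝ),
      -- `T A` depends on `A` only through the field strength `dA` (on plaquettes of the box)
      (∀ A₁ A₂ : (Fin 3 → ℤ) → Fin 3 → ℝ,
        (∀ x μ ν, InBox x → InBox (x + eV μ) → InBox (x + eV ν) → InBox (x + eV μ + eV ν) →
          dA A₁ x μ ν = dA A₂ x μ ν) →
        ∀ x μ, InBox x → InBox (x + eV μ) → T A₁ x μ = T A₂ x μ) ∧
      ∀ A : (Fin 3 → ℤ) → Fin 3 → ℝ,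
        -- `A = A' + ∂λ` on bonds of the box, with `A' = T A`
        (∃ lam : (Fin 3 → ℤ) → ℝ, ∀ x μ, InBox x → InBox (x + eV μ) →
          A x μ = T A x μ + (lam (x + eV μ) - lam x)) ∧
        -- the bound `|A'(b)| ≤ d(b,y) ‖dA‖_∞`
        (∀ M : ℝ,
          (∀ x μ ν, InBox x → InBox (x + eV μ) → InBox (x + eV ν) →
            InBox (x + eV μ + eV ν) → |dA A x μ ν| ≤ M) →
          ∀ x μ, InBox x → InBox (x + eV μ) → |T A x μ| ≤ bondDist x μ * M) := by
  obtain rfl : eV = fun μ => Pi.single μ 1 := by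
    ext μ ν
    simp [heV, Pi.single_apply]
  obtain rfl : dA = curl := by
    ext A x μ ν
    exact hdA A x μ ν
  obtain rfl : InBox = (· ∈ Set.Icc (0 : Fin 3 → ℤ) fun _ => (N : ℤ)) := by
    ext x
    simp [hBox, Pi.le_def, forall_and]
  refine ⟨fun A => A - grad (averagedPotential A y), fun A₁ A₂ hF x μ hx hx' => ?_,
    fun A => ⟨⟨averagedPotential A y, fun x μ _ _ => by simp [grad]⟩, fun M hM x μ hx hx' => ?_⟩⟩
  · exact sub_grad_averagedPotential_congr hy hx hx' fun v μ ν h =>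
      hF v μ ν h.1 h.2.1 h.2.2.1 h.2.2.2
  · have hF : ∀ v μ ν, IsPlaquetteIn _ v μ ν → |curl A v μ ν| ≤ M :=
      fun v μ ν h => hM v μ ν h.1 h.2.1 h.2.2.1 h.2.2.2
    have hN : (1 : ℤ) ≤ N := by
      have h₀ : 0 ≤ x μ := hx.1 μ
      have h₁ : x μ + 1 ≤ N := by simpa using hx'.2 μ
      omega
    have hM₀ : 0 ≤ M := (abs_nonneg _).trans <| hF 0 0 1 <| isPlaquetteIn_Icc_of_le le_rfl <| by
      intro i; fin_cases i <;> simp [hN]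
    refine abs_sub_grad_averagedPotential_le hy hx hx' hM₀ (fun i => ?_) hF
    rw [hbd]
    exact_mod_cast (Finset.le_sup (f := fun j => (x j - y j).natAbs) (Finset.mem_univ i)).trans
      (le_max_left _ _)
end

section
/- Let η > 0 and m ≥ 0, and define ω ≥ 0 by cosh(ηω) = 1 + η²m²/2. Then (a) ω ≤ m, and (b) if ηm ≤ 5 then ω ≥ m/(2 cosh 5). In particular there is an absolute constant c > 0 with c·m ≤ ω ≤ m whenever ηm ≤ 5. -/
/-!
From `cosh y ≥ 1 + y²/2` and `cosh (ηω) = 1 + (ηm)²/2` we get `cosh (ηω) ≤ cosh (ηm)`, hence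
`ω ≤ m`. Conversely `sinh² = cosh² - 1 ≥ cosh - 1 = (ηm)²/2`, so `sinh (ηω) ≥ ηm/2`, while
`sinh y ≤ y cosh 5` on `[0, 5]` by the mean value theorem; as `ηω ≤ ηm ≤ 5`, this gives
`ηm/2 ≤ ηω cosh 5`.
-/

open Real

namespace Real

lemma one_add_sq_div_two_le_cosh (x : ℝ) : 1 + x ^ 2 / 2 ≤ cosh x := by
  have hsinh : |x / 2| ≤ |sinh (x / 2)| := by
    rw [abs_sinh, abs_div, abs_two]
    exact self_le_sinh_iff.2 (by positivity)
  have hsq : (x / 2) ^ 2 ≤ sinh (x / 2) ^ 2 := sq_le_sq.2 hsinh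
  have hdouble : cosh x = 1 + 2 * sinh (x / 2) ^ 2 := by
    rw [← mul_div_cancel₀ x two_ne_zero, cosh_two_mul, cosh_sq]
    ring_nf
  linarith

lemma cosh_sub_one_le_sinh_sq (x : ℝ) : cosh x - 1 ≤ sinh x ^ 2 := by
  nlinarith [sinh_sq x, one_le_cosh x]

lemma sinh_le_mul_cosh_of_le {x a : ℝ} (hx : 0 ≤ x) (hxa : x ≤ a) : sinh x ≤ x * cosh a := by
  have hderiv : ∀ y ∈ interior (Set.Icc 0 a), deriv sinh y ≤ cosh a := by
    rw [interior_Icc]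
    intro y hy
    rw [deriv_sinh, cosh_le_cosh, abs_of_pos hy.1, abs_of_pos (hy.1.trans hy.2)]
    exact hy.2.le
  simpa [mul_comm] using (convex_Icc 0 a).image_sub_le_mul_sub_of_deriv_le continuous_sinh.continuousOn
    differentiable_sinh.differentiableOn hderiv 0 ⟨le_rfl, hx.trans hxa⟩ x ⟨hx, hxa⟩ hx

end Real

/-- Lattice dispersion: if `cosh(ηω) = 1 + η²m²/2` with `η > 0`, `m ≥ 0`, `ω ≥ 0`, then
(a) `ω ≤ m`, and (b) if `ηm ≤ 5` then `ω ≥ m/(2 cosh 5)`. In particular there is an absolute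
constant `c > 0` with `c m ≤ ω ≤ m` whenever `ηm ≤ 5`. -/
theorem stmt15 (η m ω : ℝ) (hη : 0 < η) (hm : 0 ≤ m) (hω : 0 ≤ ω)
    (h : Real.cosh (η * ω) = 1 + η ^ 2 * m ^ 2 / 2) :
    ω ≤ m ∧ (η * m ≤ 5 → m / (2 * Real.cosh 5) ≤ ω) ∧
    (∃ c : ℝ, 0 < c ∧ (η * m ≤ 5 → c * m ≤ ω ∧ ω ≤ m)) := by
  have hηω : 0 ≤ η * ω := mul_nonneg hη.le hω
  have hle : ω ≤ m := by
    have hcosh : cosh (η * ω) ≤ cosh (η * m) := by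
      rw [h]; linarith [one_add_sq_div_two_le_cosh (η * m)]
    rw [cosh_le_cosh, abs_of_nonneg hηω, abs_of_nonneg (mul_nonneg hη.le hm)] at hcosh
    exact le_of_mul_le_mul_left hcosh hη
  have hlower : η * m ≤ 5 → m / (2 * cosh 5) ≤ ω := by
    intro h5
    have hsinh_ge : η * m / 2 ≤ sinh (η * ω) := by
      refine le_of_sq_le_sq ?_ (sinh_nonneg_iff.2 hηω)
      nlinarith [cosh_sub_one_le_sinh_sq (η * ω), sq_nonneg (η * m)]
    have hsinh_le : sinh (η * ω) ≤ η * ω * cosh 5 :=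
      sinh_le_mul_cosh_of_le hηω ((mul_le_mul_of_nonneg_left hle hη.le).trans h5)
    rw [div_le_iff₀ (by positivity)]
    nlinarith
  refine ⟨hle, hlower, 1 / (2 * cosh 5), by positivity, fun h5 => ⟨?_, hle⟩⟩
  rw [one_div_mul_eq_div]; exact hlower h5
end
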